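/- arXiv:1808.04732 — 2 statements merged into one kernel-verified Lean document; each statement's English description precedes it below -/
import Mathlib

section
/- Let T and S be perfect trees and let f be a function from the ordinals to sets of finite binary strings satisfying: f 0 = T ∩ S; f (α+1) = { s ∈ f α : some extension t of s with t ∈ f α splits in f α } for every ordinal α; and f λ = ⋂_{α < λ} f α for every limit ordinal λ. Then there exists a countable ordinal α (i.e., α < ω₁) with f (α+1) = f α; moreover, for every ordinal α with f (α+1) = f α, one has f α = T ∧ S (in particular, if f α is nonempty then f α is the maximal perfect tree contained in T ∩ S, and if f α is empty then no perfect tree is contained in T ∩ S). -/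
/-!
The map `A ↦ {s ∈ A | s has a splitting extension in A}` preserves trees and never removes a
perfect subtree, so every stage of the derivation is a tree containing the meet `T ∧ S`. A fixed
point `A` of the map is a perfect tree (or empty), hence contained in the meet. A derivation that
does not stabilise before `ω₁` would remove a distinct string at each of uncountably many stages,
which is impossible since there are only countably many strings.
-/

/-- A tree: a set of finite binary strings closed under initial segments (prefixes). -/
def IsTree (T : Set (List Bool)) : Prop :=
  ∀ ⦃s t : List Bool⦄, s <+: t → t ∈ T → s ∈ T

/-- A node `t` splits in a set `A` of strings if both one-step extensions belong to `A`. -/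
def Splits (A : Set (List Bool)) (t : List Bool) : Prop :=
  t ++ [false] ∈ A ∧ t ++ [true] ∈ A

/-- A perfect tree: a nonempty tree each of whose elements has a splitting extension in it. -/
def IsPerfect (T : Set (List Bool)) : Prop :=
  T.Nonempty ∧ IsTree T ∧ ∀ s ∈ T, ∃ t ∈ T, s <+: t ∧ Splits T t

/-- The cone `C_s`: all strings comparable with `s`. -/
def Cone (s : List Bool) : Set (List Bool) :=
  {t | s <+: t ∨ t <+: s}

/-- `T_s`: the elements of `T` comparable with `s`. -/
def restrictTo (T : Set (List Bool)) (s : List Bool) : Set (List Bool) :=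
  {t ∈ T | s <+: t ∨ t <+: s}

/-- The meet `A ∧ B`: the union of all perfect trees contained in `A ∩ B`. -/
def meet (A B : Set (List Bool)) : Set (List Bool) :=
  ⋃₀ {U | IsPerfect U ∧ U ⊆ A ∩ B}

open Cardinal

def splitDerivative (A : Set (List Bool)) : Set (List Bool) :=
  {s ∈ A | ∃ t ∈ A, s <+: t ∧ Splits A t}

theorem splitDerivative_subset (A : Set (List Bool)) : splitDerivative A ⊆ A :=
  fun _ hs => hs.1

theorem IsTree.inter {A B : Set (List Bool)} (hA : IsTree A) (hB : IsTree B) :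
    IsTree (A ∩ B) :=
  fun _ _ hst ht => ⟨hA hst ht.1, hB hst ht.2⟩

theorem IsTree.splitDerivative {A : Set (List Bool)} (hA : IsTree A) :
    IsTree (splitDerivative A) := by
  rintro s t hst ⟨htA, u, huA, htu, hu⟩
  exact ⟨hA hst htA, u, huA, hst.trans htu, hu⟩

theorem IsPerfect.subset_splitDerivative {U A : Set (List Bool)} (hU : IsPerfect U)
    (hUA : U ⊆ A) : U ⊆ splitDerivative A := by
  intro s hs
  obtain ⟨t, htU, hst, hfalse, htrue⟩ := hU.2.2 s hs
  exact ⟨hUA hs, t, hUA htU, hst, hUA hfalse, hUA htrue⟩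

theorem IsPerfect.subset_meet {U A B : Set (List Bool)} (hU : IsPerfect U) (hUAB : U ⊆ A ∩ B) :
    U ⊆ meet A B :=
  Set.subset_sUnion_of_mem ⟨hU, hUAB⟩

theorem isPerfect_of_splitDerivative_eq {A : Set (List Bool)} (hA : IsTree A)
    (hne : A.Nonempty) (hfix : splitDerivative A = A) : IsPerfect A :=
  ⟨hne, hA, fun s hs => (hfix.symm ▸ hs : s ∈ splitDerivative A).2⟩

theorem subset_meet_of_splitDerivative_eq {A B C : Set (List Bool)} (hA : IsTree A)
    (hfix : splitDerivative A = A) (hABC : A ⊆ B ∩ C) : A ⊆ meet B C :=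
  fun _ hs => (isPerfect_of_splitDerivative_eq hA ⟨_, hs⟩ hfix).subset_meet hABC hs

theorem Ordinal.antitone_of_succ_subset {X : Type*} {f : Ordinal → Set X}
    (hsucc : ∀ α, f (α + 1) ⊆ f α)
    (hlim : ∀ l, Order.IsSuccLimit l → ∀ α < l, f l ⊆ f α) : Antitone f := by
  intro α β hαβ
  induction β using Ordinal.limitRecOn with
  | zero => rw [nonpos_iff_eq_zero.mp hαβ]
  | add_one β ih =>
    rcases hαβ.eq_or_lt with rfl | hlt
    · rfl
    · exact (hsucc β).trans (ih (Order.lt_add_one_iff.mp hlt))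
  | limit l hl _ =>
    rcases hαβ.eq_or_lt with rfl | hlt
    · rfl
    · exact hlim l hl α hlt

theorem Ordinal.exists_lt_aleph_one_succ_eq {X : Type*} [Countable X] {f : Ordinal → Set X}
    (hf : Antitone f) : ∃ α < (aleph 1).ord, f (α + 1) = f α := by
  by_contra! hne
  have hdiff : ∀ α : Set.Iio (aleph 1).ord, (f α \ f (α + 1)).Nonempty := fun α =>
    Set.sdiff_nonempty.mpr fun hle => hne α α.2 ((hf le_self_add).antisymm hle)
  choose g hg using hdiff
  have hinj : Function.Injective g := .of_lt_imp_ne fun α β hαβ heq =>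
    (hg α).2 (heq ▸ hf (Order.add_one_le_of_lt hαβ) (hg β).1)
  have : Countable (Set.Iio (aleph 1).ord) := hinj.countable
  have hcard := mk_le_aleph0 (α := Set.Iio (aleph 1).ord)
  rw [Cardinal.mk_Iio_ordinal, card_ord, lift_le_aleph0] at hcard
  exact hcard.not_gt aleph0_lt_aleph_one

section Derivation

variable {T S : Set (List Bool)} {f : Ordinal → Set (List Bool)}
  (h0 : f 0 = T ∩ S)
  (hsucc : ∀ α, f (α + 1) = splitDerivative (f α))
  (hlim : ∀ l, Order.IsSuccLimit l → f l = {s | ∀ α < l, s ∈ f α})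
include h0 hsucc hlim

theorem isTree_derivation (hT : IsTree T) (hS : IsTree S) (α : Ordinal) : IsTree (f α) := by
  induction α using Ordinal.limitRecOn with
  | zero => exact h0 ▸ hT.inter hS
  | add_one β ih => exact hsucc β ▸ ih.splitDerivative
  | limit l hl ih =>
    rw [hlim l hl]
    exact fun s t hst ht α hα => ih α hα hst (ht α hα)

theorem IsPerfect.subset_derivation {U : Set (List Bool)} (hU : IsPerfect U)
    (hUTS : U ⊆ T ∩ S) (α : Ordinal) : U ⊆ f α := by
  induction α using Ordinal.limitRecOn with
  | zero => exact h0 ▸ hUTS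
  | add_one β ih => exact hsucc β ▸ hU.subset_splitDerivative ih
  | limit l hl ih =>
    rw [hlim l hl]
    exact fun s hs α hα => ih α hα hs

end Derivation

/-- the transfinite derivation of `T ∩ S` stabilizes at a countable
stage, and any stable value equals the meet `T ∧ S`. -/
theorem meet_construction_stabilizes (T S : Set (List Bool))
    (hT : IsPerfect T) (hS : IsPerfect S)
    (f : Ordinal → Set (List Bool))
    (h0 : f 0 = T ∩ S)
    (hsucc : ∀ α : Ordinal,
      f (α + 1) = {s ∈ f α | ∃ t ∈ f α, s <+: t ∧ Splits (f α) t})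
    (hlim : ∀ l : Ordinal, Order.IsSuccLimit l → f l = {s | ∀ α < l, s ∈ f α}) :
    (∃ α : Ordinal, α < (Cardinal.aleph 1).ord ∧ f (α + 1) = f α) ∧
      ∀ α : Ordinal, f (α + 1) = f α → f α = meet T S := by
  have hanti : Antitone f := Ordinal.antitone_of_succ_subset
    (fun α => hsucc α ▸ splitDerivative_subset (f α))
    (fun l hl α hα => (hlim l hl).subset.trans fun _ hs => hs α hα)
  refine ⟨Ordinal.exists_lt_aleph_one_succ_eq hanti, fun α hfix => ?_⟩
  have hTS : f α ⊆ T ∩ S := h0 ▸ hanti (zero_le (a := α))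
  have htree : IsTree (f α) := isTree_derivation h0 hsucc hlim hT.2.1 hS.2.1 α
  refine (subset_meet_of_splitDerivative_eq htree ((hsucc α).symm.trans hfix) hTS).antisymm ?_
  exact Set.sUnion_subset fun U ⟨hU, hUTS⟩ => hU.subset_derivation h0 hsucc hlim hUTS α
end

section
/- Let P be a perfect poset, let T ∈ P, and let s ∈ T. Then T_s = T ∧ C_s, and consequently T_s ∈ P; that is, every perfect poset is closed under restriction to a node. -/
/-- A perfect poset: a collection of perfect trees containing all cones and
closed under unions and (nonempty) meets. -/
def PerfectPoset (P : Set (Set (List Bool))) : Prop :=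
  (∀ T ∈ P, IsPerfect T) ∧
  (∀ s : List Bool, Cone s ∈ P) ∧
  (∀ T ∈ P, ∀ S ∈ P, T ∪ S ∈ P) ∧
  (∀ T ∈ P, ∀ S ∈ P, meet T S ≠ ∅ → meet T S ∈ P)

/-- `T` and `S` are compatible in `P` if some `U ∈ P` is contained in both. -/
def CompatIn (P : Set (Set (List Bool))) (T S : Set (List Bool)) : Prop :=
  ∃ U ∈ P, U ⊆ T ∧ U ⊆ S

/-!
`T_s` is a perfect tree (every node of `T` above `s` has a splitting extension in `T`, which
stays above `s`), and `T_s = T ∩ C_s`. A perfect `A ∩ B` is the largest perfect tree inside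
itself, so it equals `A ∧ B`; in particular `T ∧ C_s = T_s` is nonempty and lies in `P`.
-/

lemma restrictTo_eq_inter_cone (T : Set (List Bool)) (s : List Bool) :
    restrictTo T s = T ∩ Cone s :=
  rfl

lemma meet_subset_inter (A B : Set (List Bool)) : meet A B ⊆ A ∩ B :=
  Set.sUnion_subset fun _ hU => hU.2

lemma meet_eq_inter_of_isPerfect {A B : Set (List Bool)} (h : IsPerfect (A ∩ B)) :
    meet A B = A ∩ B :=
  (meet_subset_inter A B).antisymm (Set.subset_sUnion_of_mem ⟨h, subset_rfl⟩)

lemma isTree_restrictTo {T : Set (List Bool)} (hT : IsTree T) (s : List Bool) :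
    IsTree (restrictTo T s) := by
  rintro u t hut ⟨htT, hst | hts⟩
  · exact ⟨hT hut htT, List.prefix_or_prefix_of_prefix hst hut⟩
  · exact ⟨hT hut htT, Or.inr (hut.trans hts)⟩

lemma isPerfect_restrictTo {T : Set (List Bool)} (hT : IsPerfect T) {s : List Bool}
    (hs : s ∈ T) : IsPerfect (restrictTo T s) := by
  obtain ⟨-, htree, hsplit⟩ := hT
  have split_above : ∀ t ∈ T, s <+: t →
      ∃ u ∈ restrictTo T s, t <+: u ∧ Splits (restrictTo T s) u := by
    intro t ht hst
    obtain ⟨u, huT, htu, hfalse, htrue⟩ := hsplit t ht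
    have hsu : s <+: u := hst.trans htu
    exact ⟨u, ⟨huT, Or.inl hsu⟩, htu, ⟨hfalse, Or.inl (hsu.trans ⟨[false], rfl⟩)⟩,
      ⟨htrue, Or.inl (hsu.trans ⟨[true], rfl⟩)⟩⟩
  refine ⟨⟨s, hs, Or.inl List.prefix_rfl⟩, isTree_restrictTo htree s, ?_⟩
  rintro t ⟨htT, hst | hts⟩
  · exact split_above t htT hst
  · obtain ⟨u, hu, hsu, hsplit_u⟩ := split_above s hs List.prefix_rfl
    exact ⟨u, hu, hts.trans hsu, hsplit_u⟩

/-- `T_s = T ∧ C_s`, so perfect posets are closed under restriction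
to a node. -/
theorem perfectPoset_closed_under_restrict (P : Set (Set (List Bool)))
    (hP : PerfectPoset P) (T : Set (List Bool)) (hT : T ∈ P)
    (s : List Bool) (hs : s ∈ T) :
    restrictTo T s = meet T (Cone s) ∧ restrictTo T s ∈ P := by
  obtain ⟨hperfect, hcone, -, hmeet⟩ := hP
  have hTs : IsPerfect (T ∩ Cone s) :=
    restrictTo_eq_inter_cone T s ▸ isPerfect_restrictTo (hperfect T hT) hs
  have heq : restrictTo T s = meet T (Cone s) := by
    rw [restrictTo_eq_inter_cone, meet_eq_inter_of_isPerfect hTs]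
  refine ⟨heq, heq ▸ hmeet T hT (Cone s) (hcone s) ?_⟩
  rw [meet_eq_inter_of_isPerfect hTs]
  exact hTs.1.ne_empty
end
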